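/- Let G be a finite simple graph, s a vertex of G, and X ⊆ V(G) with |X| = k such that G ∖ X is a threshold graph. Then every optimal strategy for the firefighting process on (G, s) defends at most 2k + 2 vertices. -/

import Mathlib

/-!
Let `u` be the last defended vertex. By minimality `u` is threatened at some step; let `m` be the
first one and `β` the neighbour of `u` burning then. Since `u` must be defended by step `m + 1`, it
suffices to show `m ≤ 2k + 1`. Tracing the fire back from `β` gives a chain `x 0, …, x m` with
`x i` catching fire exactly at step `i`. Every step of the chain either touches one of the at most
`k` vertices of `X` on it (each touching at most two steps) or is a spread step inside the
threshold graph `H = G ∖ X`. In a threshold graph one of two neighbourhoods is contained in the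
other's closure; comparing the neighbourhoods of a burning and an unthreatened vertex of `H` shows
that the spread steps occupy at most two consecutive positions, so `m ≤ 2k + 2`. One unit is saved
in each case: if `u ∈ X` it is not on the chain, if `β ∈ X` it touches only the last step, and
otherwise comparing with `u` itself leaves the last step as the only possible spread.
-/

open SimpleGraph

variable {V : Type*}

/-- The set of vertices burned by the end of time step `i` (0-indexed: `burnt G s S i` is `B_i`),
when a fire starts at `s` and the firefighter defends the vertices of the list `S` in order. -/
def burnt (G : SimpleGraph V) (s : V) (S : List V) : ℕ → Set V
  | 0 => {s}
  | i + 1 => burnt G s S i ∪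
      {u | u ∉ S.take (i + 1) ∧ ∃ b ∈ burnt G s S i, G.Adj u b}

/-- The set of all vertices ever burned by the strategy `S`. -/
def BurntSet (G : SimpleGraph V) (s : V) (S : List V) : Set V := ⋃ i, burnt G s S i

/-- A strategy is a sequence of pairwise distinct vertices; it is valid if the vertex defended
at each step is not yet burning at the start of that step. -/
def ValidStrategy (G : SimpleGraph V) (s : V) (S : List V) : Prop :=
  S.Nodup ∧ ∀ (i : ℕ) (h : i < S.length), S.get ⟨i, h⟩ ∉ burnt G s S i

/-- The number of vertices saved (i.e. not burned) by the strategy `S`. -/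
noncomputable def sav (G : SimpleGraph V) (s : V) (S : List V) : ℕ := (BurntSet G s S)ᶜ.ncard

/-- A valid strategy is minimal if every proper subsequence of it which is itself a valid
strategy saves strictly fewer vertices. -/
def MinimalStrategy (G : SimpleGraph V) (s : V) (S : List V) : Prop :=
  ValidStrategy G s S ∧ ∀ S' : List V, S'.Sublist S → S' ≠ S → ValidStrategy G s S' →
    sav G s S' < sav G s S

/-- A strategy is optimal if it is minimal and saves the maximum number of vertices. -/
def OptimalStrategy (G : SimpleGraph V) (s : V) (S : List V) : Prop :=
  MinimalStrategy G s S ∧ ∀ S' : List V, ValidStrategy G s S' → sav G s S' ≤ sav G s S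

/-- A walk is an induced path if it is a path and the subgraph induced on its vertices has no
edges besides the edges of the path. -/
def IsInducedPath (G : SimpleGraph V) {a b : V} (p : G.Walk a b) : Prop :=
  p.IsPath ∧ ∀ x ∈ p.support, ∀ y ∈ p.support, G.Adj x y → p.toSubgraph.Adj x y

/-- `u` is reachable from `s` in the subgraph of `G` induced on the complement of `A`. -/
def ReachAvoiding (G : SimpleGraph V) (A : Set V) (s u : V) : Prop :=
  ∃ p : G.Walk s u, ∀ x ∈ p.support, x ∉ A

/-- A graph is a threshold graph if for every two vertices `x, y`,
`N(x) ⊆ N[y]` or `N(y) ⊆ N[x]`. -/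
def IsThresholdGraph {W : Type*} (H : SimpleGraph W) : Prop :=
  ∀ x y : W, H.neighborSet x ⊆ H.neighborSet y ∪ {y} ∨
    H.neighborSet y ⊆ H.neighborSet x ∪ {x}

section Firefighting

variable {G : SimpleGraph V} {s : V} {S : List V}

theorem burnt_mono : Monotone (burnt G s S) :=
  monotone_nat_of_le_succ fun _ => Set.subset_union_left

theorem mem_burnt_succ_of_adj {v w : V} {i : ℕ} (hv : v ∉ S) (hvw : G.Adj v w)
    (hw : w ∈ burnt G s S i) : v ∈ burnt G s S (i + 1) :=
  Or.inr ⟨fun h => hv (List.take_subset _ _ h), w, hw, hvw⟩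

theorem ValidStrategy.notMem_burnt (hS : ValidStrategy G s S) {v : V} (hv : v ∈ S) (i : ℕ) :
    v ∉ burnt G s S i := by
  obtain ⟨j, hj, rfl⟩ := List.getElem_of_mem hv
  induction i with
  | zero => exact fun h => hS.2 j hj (burnt_mono (Nat.zero_le j) h)
  | succ i ih =>
    intro h
    rcases Nat.lt_or_ge j (i + 1) with hji | hji
    · rcases h with h | ⟨hnt, -⟩
      · exact ih h
      · exact hnt (List.mem_take_iff_getElem.mpr ⟨j, by omega, rfl⟩)
    · exact hS.2 j hj (burnt_mono hji h)

def BurnsAt (G : SimpleGraph V) (s : V) (S : List V) (v : V) (i : ℕ) : Prop :=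
  v ∈ burnt G s S i ∧ ∀ j < i, v ∉ burnt G s S j

theorem BurnsAt.notMem (hS : ValidStrategy G s S) {v : V} {i : ℕ} (h : BurnsAt G s S v i) :
    v ∉ S :=
  fun hv => hS.notMem_burnt hv i h.1

theorem BurnsAt.unique {v : V} {i j : ℕ} (hi : BurnsAt G s S v i) (hj : BurnsAt G s S v j) :
    i = j := by
  by_contra hne
  rcases Nat.lt_or_gt_of_ne hne with h | h
  · exact hj.2 i h hi.1
  · exact hi.2 j h hj.1

theorem BurnsAt.not_adj (hS : ValidStrategy G s S) {v w : V} {i j : ℕ} (h : BurnsAt G s S v i)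
    (hji : j + 1 < i) (hw : w ∈ burnt G s S j) : ¬ G.Adj v w :=
  fun hvw => h.2 (j + 1) hji (mem_burnt_succ_of_adj (h.notMem hS) hvw hw)

theorem BurnsAt.exists_adj_burnsAt {v : V} {i : ℕ} (h : BurnsAt G s S v (i + 1)) :
    ∃ z, G.Adj v z ∧ BurnsAt G s S z i := by
  obtain ⟨hv | ⟨hnt, z, hz, hvz⟩, hnew⟩ := h
  · exact absurd hv (hnew i i.lt_succ_self)
  refine ⟨z, hvz, hz, fun j hj hzj => hnew i i.lt_succ_self ?_⟩
  have hnt' : v ∉ S.take (j + 1) := fun h => hnt (List.take_subset_take_left S (by omega) h)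
  exact burnt_mono (show j + 1 ≤ i by omega) (Or.inr ⟨hnt', z, hzj, hvz⟩)

theorem BurnsAt.exists_chain {v : V} {m : ℕ} (h : BurnsAt G s S v m) :
    ∃ x : ℕ → V, x m = v ∧ (∀ i ≤ m, BurnsAt G s S (x i) i) ∧
      ∀ i < m, G.Adj (x i) (x (i + 1)) := by
  induction m generalizing v with
  | zero => exact ⟨fun _ => v, rfl, fun i hi => by rwa [Nat.le_zero.mp hi], by simp⟩
  | succ m ih =>
    obtain ⟨z, hvz, hz⟩ := h.exists_adj_burnsAt
    obtain ⟨x, rfl, hburn, hadj⟩ := ih hz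
    refine ⟨Function.update x (m + 1) v, by simp, fun i hi => ?_, fun i hi => ?_⟩
    · rcases hi.lt_or_eq with hi | rfl
      · rw [Function.update_of_ne (by omega)]
        exact hburn i (by omega)
      · simpa using h
    · rcases (Nat.lt_succ_iff.mp hi).lt_or_eq with hi | rfl
      · rw [Function.update_of_ne (by omega), Function.update_of_ne (by omega)]
        exact hadj i hi
      · simpa using hvz.symm

theorem burnt_eq_burnt_append_singleton {u : V}
    (hu : ∀ i, ∀ b ∈ burnt G s (S ++ [u]) i, ¬ G.Adj u b) (i : ℕ) :
    burnt G s S i = burnt G s (S ++ [u]) i := by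
  induction i with
  | zero => rfl
  | succ i ih =>
    simp only [burnt, ih]
    congr 1
    ext w
    simp only [Set.mem_ofPred_eq, List.take_append, List.mem_append, not_or]
    constructor
    · rintro ⟨hw, b, hb, hwb⟩
      refine ⟨⟨hw, fun hw' => hu i b hb ?_⟩, b, hb, hwb⟩
      rwa [List.eq_of_mem_singleton (List.take_subset _ _ hw')] at hwb
    · rintro ⟨⟨hw, -⟩, hb⟩
      exact ⟨hw, hb⟩

/-- Otherwise dropping `u` changes no burnt set, contradicting minimality. -/
theorem MinimalStrategy.exists_adj_burnt_of_append {u : V} (hS : MinimalStrategy G s (S ++ [u])) :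
    ∃ i, ∃ b ∈ burnt G s (S ++ [u]) i, G.Adj u b := by
  by_contra! hu
  have hB := burnt_eq_burnt_append_singleton hu
  have hvalid : ValidStrategy G s S := by
    refine ⟨hS.1.1.sublist (List.sublist_append_left S [u]), fun i hi => ?_⟩
    have := hS.1.2 i (by simp only [List.length_append, List.length_singleton]; omega)
    simpa [hB, List.getElem_append_left hi] using this
  have hsav : sav G s S = sav G s (S ++ [u]) := by
    simp only [sav, BurntSet, hB]
  exact (hS.2 S (List.sublist_append_left S [u]) (by simp) hvalid).ne hsav

theorem MinimalStrategy.exists_first_threat {u : V} (hS : MinimalStrategy G s (S ++ [u])) :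
    ∃ m β, BurnsAt G s (S ++ [u]) β m ∧ G.Adj u β ∧
      ∀ j < m, ∀ b ∈ burnt G s (S ++ [u]) j, ¬ G.Adj u b := by
  classical
  have h := hS.exists_adj_burnt_of_append
  obtain ⟨β, hβ, huβ⟩ := Nat.find_spec h
  exact ⟨Nat.find h, β, ⟨hβ, fun j hj hβj => Nat.find_min h hj ⟨β, hβj, huβ⟩⟩, huβ,
    fun j hj b hb hub => Nat.find_min h hj ⟨b, hb, hub⟩⟩

theorem ValidStrategy.length_le_of_adj_burnt {u b : V} {m : ℕ}
    (hS : ValidStrategy G s (S ++ [u])) (hb : b ∈ burnt G s (S ++ [u]) m) (hub : G.Adj u b) :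
    S.length ≤ m := by
  by_contra! hm
  have huS : u ∉ S := fun h => (List.nodup_append.mp hS.1).2.2 u h u (by simp) rfl
  have hu : u ∉ (S ++ [u]).take (m + 1) := by
    rw [List.take_append_of_le_length hm]
    exact fun h => huS (List.take_subset _ _ h)
  exact hS.notMem_burnt (by simp) (m + 1) (Or.inr ⟨hu, b, hb, hub⟩)

theorem IsThresholdGraph.induce_adj_or_adj {A : Set V} (h : IsThresholdGraph (G.induce A))
    {a b : V} (ha : a ∈ A) (hb : b ∈ A) :
    (∀ w ∈ A, G.Adj a w → w = b ∨ G.Adj b w) ∨ (∀ w ∈ A, G.Adj b w → w = a ∨ G.Adj a w) := by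
  rcases h ⟨a, ha⟩ ⟨b, hb⟩ with h | h
  · exact .inl fun w hw haw => by simpa [Subtype.ext_iff] using h (show ⟨w, hw⟩ ∈ _ from haw)
  · exact .inr fun w hw hbw => by simpa [Subtype.ext_iff] using h (show ⟨w, hw⟩ ∈ _ from hbw)

/-- Compare the neighbourhoods of `α` and `z` in the threshold graph: either `z` sets `β` on fire,
or every undefended `A`-neighbour `y` of `z` catches fire next to `α`. -/
theorem mem_of_adj_burnt_of_threshold {A : Set V} (hth : IsThresholdGraph (G.induce A))
    {α β z y : V} {n : ℕ} (hα : α ∈ A) (hβ : β ∈ A) (hαβ : G.Adj α β) (hβS : β ∉ S)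
    (hβn : β ∉ burnt G s S (n + 1)) (hαn : α ∉ burnt G s S (n + 1))
    (hαsafe : ∀ w ∈ burnt G s S (n + 1), ¬ G.Adj α w)
    (hz : z ∈ A) (hy : y ∈ A) (hzn : z ∈ burnt G s S n) (hzy : G.Adj z y) : y ∈ S := by
  rcases hth.induce_adj_or_adj hα hz with h | h
  · exfalso
    rcases h β hβ hαβ with rfl | hzβ
    · exact hβn (burnt_mono n.le_succ hzn)
    · exact hβn (mem_burnt_succ_of_adj hβS hzβ.symm hzn)
  · by_contra hyS
    have hyn := mem_burnt_succ_of_adj hyS hzy.symm hzn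
    rcases h y hy hzy with rfl | hαy
    · exact hαn hyn
    · exact hαsafe y hyn hαy

section Chain

variable {A : Set V} {x : ℕ → V} {m : ℕ}

theorem chain_spread_step_le_add_one (hS : ValidStrategy G s S)
    (hth : IsThresholdGraph (G.induce A))
    (hburn : ∀ i ≤ m, BurnsAt G s S (x i) i) (hadj : ∀ i < m, G.Adj (x i) (x (i + 1)))
    {j j' : ℕ} (hj : x j ∈ A ∧ x (j + 1) ∈ A) (hj' : x j' ∈ A ∧ x (j' + 1) ∈ A) (hj'm : j' < m) :
    j' ≤ j + 1 := by
  by_contra! hjj'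
  obtain ⟨n, rfl⟩ : ∃ n, j' = n + 2 := ⟨j' - 2, by omega⟩
  have hβ := hburn (n + 2) (by omega)
  have hα := hburn (n + 3) (by omega)
  refine (hburn (j + 1) (by omega)).notMem hS ?_
  exact mem_of_adj_burnt_of_threshold hth hj'.2 hj'.1 (hadj (n + 2) hj'm).symm (hβ.notMem hS)
    (hβ.2 (n + 1) (by omega)) (hα.2 (n + 1) (by omega))
    (fun w hw => hα.not_adj hS (by omega) hw) hj.1 hj.2
    (burnt_mono (by omega) (hburn j (by omega)).1) (hadj j (by omega))

theorem chain_spread_step_eq_sub_one_of_first_threat (hS : ValidStrategy G s S)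
    (hth : IsThresholdGraph (G.induce A))
    (hburn : ∀ i ≤ m, BurnsAt G s S (x i) i) (hadj : ∀ i < m, G.Adj (x i) (x (i + 1)))
    {u : V} (hu : ∀ i, u ∉ burnt G s S i) (huA : u ∈ A) (hxm : x m ∈ A) (hux : G.Adj u (x m))
    (hfirst : ∀ j < m, ∀ b ∈ burnt G s S j, ¬ G.Adj u b)
    {j : ℕ} (hj : x j ∈ A ∧ x (j + 1) ∈ A) (hjm : j < m) : j = m - 1 := by
  by_contra! hjm'
  obtain ⟨n, rfl⟩ : ∃ n, m = n + 2 := ⟨m - 2, by omega⟩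
  refine (hburn (j + 1) (by omega)).notMem hS ?_
  exact mem_of_adj_burnt_of_threshold hth huA hxm hux ((hburn _ le_rfl).notMem hS)
    ((hburn _ le_rfl).2 (n + 1) (by omega)) (hu _) (hfirst (n + 1) (by omega)) hj.1 hj.2
    (burnt_mono (by omega) (hburn j (by omega)).1) (hadj j hjm)

end Chain

open Finset

/-- A step `j → j + 1` with an end in `P` is charged to that end; an index in `P` is charged at
most twice, and `m` at most once. -/
theorem le_two_mul_card_filter_add_card_filter (P : ℕ → Prop) [DecidablePred P] (m : ℕ) :
    m + (if P m then 1 else 0) ≤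
      2 * #{i ∈ range (m + 1) | P i} + #{j ∈ range m | ¬ P j ∧ ¬ P (j + 1)} := by
  induction m with
  | zero => simp only [card_filter, sum_range_succ, sum_range_zero]; split_ifs <;> omega
  | succ m ih =>
    simp only [card_filter, sum_range_succ] at ih ⊢
    by_cases hm : P m <;> by_cases hm' : P (m + 1) <;> simp only [hm, hm', if_true, if_false,
      not_true, not_false_eq_true, and_true, and_false] at ih ⊢ <;> omega

theorem card_le_two_of_le_add_one {T : Finset ℕ} (h : ∀ i ∈ T, ∀ j ∈ T, i ≤ j + 1) : #T ≤ 2 := by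
  rcases T.eq_empty_or_nonempty with rfl | hT
  · simp
  calc #T ≤ #(Icc (T.min' hT) (T.min' hT + 1)) :=
        card_le_card fun i hi => mem_Icc.mpr ⟨min'_le T i hi, h i hi _ (min'_mem T hT)⟩
    _ = 2 := by simp only [Nat.card_Icc]; omega

theorem BurnsAt.le_two_mul_card_add_one_of_first_threat {X : Finset V}
    (hS : ValidStrategy G s S) (hth : IsThresholdGraph (G.induce (↑X : Set V)ᶜ)) {u β : V} {m : ℕ}
    (hu : ∀ i, u ∉ burnt G s S i) (hβ : BurnsAt G s S β m) (huβ : G.Adj u β)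
    (hfirst : ∀ j < m, ∀ b ∈ burnt G s S j, ¬ G.Adj u b) :
    m ≤ 2 * #X + 1 := by
  classical
  obtain ⟨x, rfl, hburn, hadj⟩ := hβ.exists_chain
  have hburn' : ∀ i ∈ range (m + 1), BurnsAt G s S (x i) i :=
    fun i hi => hburn i (Nat.lt_succ_iff.mp (mem_range.mp hi))
  have hinj : Set.InjOn x (range (m + 1)) :=
    fun i hi j hj hij => (hburn' i hi).unique (hij ▸ hburn' j hj)
  have hcount : m + (if x m ∈ X then 1 else 0) ≤
      2 * #{i ∈ range (m + 1) | x i ∈ X} + #{j ∈ range m | x j ∉ X ∧ x (j + 1) ∉ X} :=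
    le_two_mul_card_filter_add_card_filter (fun i => x i ∈ X) m
  have hchainX : #{i ∈ range (m + 1) | x i ∈ X} ≤ #X :=
    card_le_card_of_injOn x (fun i hi => (mem_filter.mp hi).2) (hinj.mono (filter_subset _ _))
  have hspread : #{j ∈ range m | x j ∉ X ∧ x (j + 1) ∉ X} ≤ 2 :=
    card_le_two_of_le_add_one fun i hi j hj => chain_spread_step_le_add_one hS hth hburn hadj
      (mem_filter.mp hj).2 (mem_filter.mp hi).2 (mem_range.mp (mem_filter.mp hi).1)
  by_cases huX : u ∈ X
  · have hchainX' : #{i ∈ range (m + 1) | x i ∈ X} ≤ #(X.erase u) :=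
      card_le_card_of_injOn x (fun i hi => mem_erase.mpr
        ⟨fun h => hu i (h ▸ (hburn' i (mem_filter.mp hi).1).1), (mem_filter.mp hi).2⟩)
        (hinj.mono (filter_subset _ _))
    have := card_erase_add_one huX
    split_ifs at hcount <;> omega
  by_cases hxm : x m ∈ X
  · rw [if_pos hxm] at hcount
    omega
  · have hspread' : #{j ∈ range m | x j ∉ X ∧ x (j + 1) ∉ X} ≤ #{m - 1} :=
      card_le_card fun j hj => mem_singleton.mpr <|
        chain_spread_step_eq_sub_one_of_first_threat hS hth hburn hadj hu huX hxm huβ hfirst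
          (mem_filter.mp hj).2 (mem_range.mp (mem_filter.mp hj).1)
    rw [card_singleton] at hspread'
    omega

end Firefighting

theorem optimal_strategy_le_of_threshold_modulator_general {V : Type*} (G : SimpleGraph V)
    (s : V) (X : Finset V) (k : ℕ) (hX : X.card = k)
    (hth : IsThresholdGraph (G.induce ((↑X : Set V)ᶜ)))
    (S : List V) (hS : OptimalStrategy G s S) :
    S.length ≤ 2 * k + 2 := by
  obtain ⟨hmin, -⟩ := hS
  obtain rfl | ⟨S, u, rfl⟩ := S.eq_nil_or_concat'
  · simp
  obtain ⟨m, β, hβ, huβ, hfirst⟩ := hmin.exists_first_threat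
  have hlen := hmin.1.length_le_of_adj_burnt hβ.1 huβ
  have hm := hβ.le_two_mul_card_add_one_of_first_threat hmin.1 hth
    (hmin.1.notMem_burnt (by simp)) huβ hfirst
  simp only [List.length_append, List.length_singleton]
  omega

/-- If `X ⊆ V(G)` has size `k` and `G ∖ X` is a threshold graph, then every
optimal strategy for the firefighting process on `(G, s)` defends at most `2k + 2` vertices. -/
theorem optimal_strategy_le_of_threshold_modulator {V : Type*} [Fintype V] (G : SimpleGraph V)
    (s : V) (X : Finset V) (k : ℕ) (hX : X.card = k)
    (hth : IsThresholdGraph (G.induce ((↑X : Set V)ᶜ)))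
    (S : List V) (hS : OptimalStrategy G s S) :
    S.length ≤ 2 * k + 2 :=
  optimal_strategy_le_of_threshold_modulator_general G s X k hX hth S hS
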